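/- A separable LMM density matrix σ on ℂ^d ⊗ ℂ^d attains Tr σ² = 1/d if and only if σ = (1/d) Σ_{s=0}^{d-1} |φ_s, ψ_s⟩⟨φ_s, ψ_s| where {φ_s} and {ψ_s} are orthonormal bases of ℂ^d. -/

import Mathlib

open Matrix

/-- `σ` is a separable state: a convex combination of pure product states. -/
def IsSeparableState (d : ℕ) [NeZero d]
    (σ : Matrix (ZMod d × ZMod d) (ZMod d × ZMod d) ℂ) : Prop :=
  ∃ (n : ℕ) (lam : Fin n → ℝ) (φ ψ : Fin n → ZMod d → ℂ),
    (∀ α, 0 ≤ lam α) ∧ (∑ α, lam α = 1) ∧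
    (∀ α, ∑ s : ZMod d, ‖φ α s‖ ^ 2 = 1) ∧ (∀ α, ∑ s : ZMod d, ‖ψ α s‖ ^ 2 = 1) ∧
    σ = ∑ α, (lam α : ℂ) •
      Matrix.vecMulVec (fun p : ZMod d × ZMod d => φ α p.1 * ψ α p.2)
        (star (fun p : ZMod d × ZMod d => φ α p.1 * ψ α p.2))

/-!
Write `σ = ∑ α, w α |x α ⊗ y α⟩⟨x α ⊗ y α|` and `F α β = |⟪x α, x β⟫|²`, `G α β = |⟪y α, y β⟫|²`.
The marginal `1/d` on the first factor gives `∑ β, w β F α β = 1/d` for every `α`, so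
`∑ w α w β F α β = 1/d`; likewise for `G`; while `Tr σ² = ∑ w α w β F α β G α β`.
As `F, G ∈ [0, 1]`, `Tr σ² = 1/d` forces `F (1 - G) = G (1 - F) = 0` on the support of `w`,
i.e. `F = G ∈ {0, 1}`: two product vectors of the ensemble either define the same pure state or
are orthogonal in both factors. By the row sum again every such pure state carries weight exactly
`1/d`, so there are `d` of them, and their factors form the two orthonormal bases. Conversely, for
orthonormal bases only the diagonal overlaps survive and `Tr σ² = d · d⁻² = 1/d`.
-/

open scoped InnerProductSpace
open Finset

noncomputable section

variable {ι κ I J X : Type*}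

def ketBra (v : EuclideanSpace ℂ I) : Matrix I I ℂ := vecMulVec v (star ⇑v)

def prodVec (x : EuclideanSpace ℂ I) (y : EuclideanSpace ℂ J) : EuclideanSpace ℂ (I × J) :=
  WithLp.toLp 2 fun p => x p.1 * y p.2

def mixture [Fintype ι] (w : ι → ℝ) (v : ι → EuclideanSpace ℂ I) : Matrix I I ℂ :=
  ∑ α, (w α : ℂ) • ketBra (v α)

def partialTraceRight [Fintype J] : Matrix (I × J) (I × J) ℂ →ₗ[ℂ] Matrix I I ℂ where
  toFun σ := of fun a b => ∑ t, σ (a, t) (b, t)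
  map_add' _ _ := by ext; simp [sum_add_distrib]
  map_smul' _ _ := by ext; simp [mul_sum]

def partialTraceLeft [Fintype I] : Matrix (I × J) (I × J) ℂ →ₗ[ℂ] Matrix J J ℂ where
  toFun σ := of fun a b => ∑ s, σ (s, a) (s, b)
  map_add' _ _ := by ext; simp [sum_add_distrib]
  map_smul' _ _ := by ext; simp [mul_sum]

theorem inner_prodVec [Fintype I] [Fintype J] (x x' : EuclideanSpace ℂ I)
    (y y' : EuclideanSpace ℂ J) :
    ⟪prodVec x y, prodVec x' y'⟫_ℂ = ⟪x, x'⟫_ℂ * ⟪y, y'⟫_ℂ := by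
  simp only [EuclideanSpace.inner_eq_star_dotProduct, prodVec, dotProduct, Fintype.sum_prod_type,
    sum_mul_sum, Pi.star_apply, star_mul']
  exact sum_congr rfl fun _ _ => sum_congr rfl fun _ _ => by ring

theorem norm_prodVec [Fintype I] [Fintype J] (x : EuclideanSpace ℂ I)
    (y : EuclideanSpace ℂ J) : ‖prodVec x y‖ = ‖x‖ * ‖y‖ := by
  have h := inner_prodVec x x y y
  simp only [inner_self_eq_norm_sq_to_K, ← mul_pow] at h
  exact (sq_eq_sq₀ (norm_nonneg _) (by positivity)).mp (by exact_mod_cast h)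

theorem norm_inner_sq_le_one {E : Type*} [NormedAddCommGroup E] [InnerProductSpace ℂ E]
    {u v : E} (hu : ‖u‖ = 1) (hv : ‖v‖ = 1) : ‖⟪u, v⟫_ℂ‖ ^ 2 ≤ 1 :=
  pow_le_one₀ (norm_nonneg _) ((norm_inner_le_norm u v).trans_eq (by rw [hu, hv, one_mul]))

theorem trace_ketBra [Fintype I] (v : EuclideanSpace ℂ I) : (ketBra v).trace = ⟪v, v⟫_ℂ := by
  rw [ketBra, trace_vecMulVec]
  rfl

theorem trace_ketBra_mul_ketBra [Fintype I] (u v : EuclideanSpace ℂ I) :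
    (ketBra u * ketBra v).trace = ((‖⟪u, v⟫_ℂ‖ ^ 2 : ℝ) : ℂ) := by
  rw [ketBra, ketBra, vecMulVec_mul_vecMulVec, trace_vecMulVec, dotProduct_smul, smul_eq_mul,
    dotProduct_comm, ← EuclideanSpace.inner_eq_star_dotProduct,
    ← EuclideanSpace.inner_eq_star_dotProduct, ← inner_conj_symm]
  push_cast
  rw [RCLike.norm_conj, RCLike.conj_mul]
  rfl

theorem ketBra_smul (r : ℂ) (v : EuclideanSpace ℂ I) :
    ketBra (r • v) = ((‖r‖ ^ 2 : ℝ) : ℂ) • ketBra v := by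
  ext a b
  simp only [ketBra, WithLp.ofLp_smul, star_smul, vecMulVec_smul, smul_vecMulVec,
    Matrix.smul_apply, smul_eq_mul]
  push_cast
  rw [← Complex.conj_mul', Complex.star_def]
  ring

theorem ketBra_eq_ketBra_iff [Fintype I] {u v : EuclideanSpace ℂ I} (hu : ‖u‖ = 1)
    (hv : ‖v‖ = 1) : ketBra v = ketBra u ↔ ‖⟪u, v⟫_ℂ‖ = 1 := by
  constructor
  · intro h
    have htr := trace_ketBra_mul_ketBra u v
    rw [h, trace_ketBra_mul_ketBra, inner_self_eq_one_of_norm_eq_one hu, norm_one, one_pow] at htr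
    exact (pow_eq_one_iff_of_nonneg (norm_nonneg _) two_ne_zero).mp (by exact_mod_cast htr.symm)
  · intro h
    have hu0 : u ≠ 0 := norm_ne_zero_iff.mp (by simp [hu])
    have hv0 : v ≠ 0 := norm_ne_zero_iff.mp (by simp [hv])
    obtain ⟨r, -, rfl⟩ := (norm_inner_eq_norm_iff hu0 hv0).mp (by rw [h, hu, hv, one_mul])
    rw [norm_smul, hu, mul_one] at hv
    rw [ketBra_smul, hv]
    simp

theorem partialTraceRight_ketBra_prodVec [Fintype J] (x : EuclideanSpace ℂ I)
    (y : EuclideanSpace ℂ J) :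
    partialTraceRight (ketBra (prodVec x y)) = ((‖y‖ ^ 2 : ℝ) : ℂ) • ketBra x := by
  ext a b
  simp only [partialTraceRight, ketBra, prodVec, LinearMap.coe_mk, AddHom.coe_mk, of_apply,
    vecMulVec_apply, Pi.star_apply, star_mul', Matrix.smul_apply, smul_eq_mul,
    EuclideanSpace.norm_sq_eq, RCLike.star_def]
  push_cast
  rw [sum_mul]
  refine sum_congr rfl fun t _ => ?_
  rw [← Complex.mul_conj']
  ring

theorem partialTraceLeft_ketBra_prodVec [Fintype I] (x : EuclideanSpace ℂ I)
    (y : EuclideanSpace ℂ J) :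
    partialTraceLeft (ketBra (prodVec x y)) = ((‖x‖ ^ 2 : ℝ) : ℂ) • ketBra y := by
  ext a b
  simp only [partialTraceLeft, ketBra, prodVec, LinearMap.coe_mk, AddHom.coe_mk, of_apply,
    vecMulVec_apply, Pi.star_apply, star_mul', Matrix.smul_apply, smul_eq_mul,
    EuclideanSpace.norm_sq_eq, RCLike.star_def]
  push_cast
  rw [sum_mul]
  refine sum_congr rfl fun s _ => ?_
  rw [← Complex.mul_conj']
  ring

theorem partialTraceRight_mixture [Fintype ι] [Fintype J] (w : ι → ℝ)
    (x : ι → EuclideanSpace ℂ I) {y : ι → EuclideanSpace ℂ J} (hy : ∀ α, ‖y α‖ = 1) :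
    partialTraceRight (mixture w fun α => prodVec (x α) (y α)) = mixture w x := by
  simp [mixture, partialTraceRight_ketBra_prodVec, hy]

theorem partialTraceLeft_mixture [Fintype ι] [Fintype I] (w : ι → ℝ)
    {x : ι → EuclideanSpace ℂ I} (y : ι → EuclideanSpace ℂ J) (hx : ∀ α, ‖x α‖ = 1) :
    partialTraceLeft (mixture w fun α => prodVec (x α) (y α)) = mixture w y := by
  simp [mixture, partialTraceLeft_ketBra_prodVec, hx]

theorem trace_ketBra_mul_mixture [Fintype ι] [Fintype I] (u : EuclideanSpace ℂ I)
    (w : ι → ℝ) (v : ι → EuclideanSpace ℂ I) :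
    (ketBra u * mixture w v).trace = ((∑ β, w β * ‖⟪u, v β⟫_ℂ‖ ^ 2 : ℝ) : ℂ) := by
  simp [mixture, mul_sum, trace_sum, trace_ketBra_mul_ketBra]

theorem trace_mixture_mul_self [Fintype ι] [Fintype I] (w : ι → ℝ)
    (v : ι → EuclideanSpace ℂ I) :
    (mixture w v * mixture w v).trace
      = ((∑ α, ∑ β, w α * w β * ‖⟪v α, v β⟫_ℂ‖ ^ 2 : ℝ) : ℂ) := by
  nth_rw 1 [mixture]
  rw [sum_mul, trace_sum]
  push_cast
  refine sum_congr rfl fun α _ => ?_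
  rw [smul_mul_assoc, trace_smul, trace_ketBra_mul_mixture]
  push_cast
  simp [mul_sum, mul_assoc]

theorem sum_mul_norm_inner_sq_eq_of_mixture_eq_smul_one [Fintype ι] [Fintype I] [DecidableEq I]
    {w : ι → ℝ} {v : ι → EuclideanSpace ℂ I} {c : ℝ} (hv : mixture w v = (c : ℂ) • 1)
    (u : EuclideanSpace ℂ I) : ∑ β, w β * ‖⟪u, v β⟫_ℂ‖ ^ 2 = c * ‖u‖ ^ 2 := by
  have h := trace_ketBra_mul_mixture u w v
  rw [hv, mul_smul_comm, mul_one, trace_smul, smul_eq_mul, trace_ketBra,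
    inner_self_eq_norm_sq_to_K] at h
  apply Complex.ofReal_injective
  rw [← h]
  push_cast
  rfl

theorem sum_sum_mul_norm_inner_sq_eq_of_mixture_eq_smul_one [Fintype ι] [Fintype I]
    [DecidableEq I] {w : ι → ℝ} {v : ι → EuclideanSpace ℂ I} {c : ℝ} (hw1 : ∑ α, w α = 1)
    (hv : ∀ α, ‖v α‖ = 1) (hvm : mixture w v = (c : ℂ) • 1) :
    ∑ α, ∑ β, w α * w β * ‖⟪v α, v β⟫_ℂ‖ ^ 2 = c := by
  simp_rw [mul_assoc, ← mul_sum, sum_mul_norm_inner_sq_eq_of_mixture_eq_smul_one hvm, hv,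
    one_pow, mul_one, ← sum_mul, hw1, one_mul]

theorem mul_eq_self_of_sum_mul_eq_sum [Fintype κ] {c f g : κ → ℝ}
    (hc : ∀ k, 0 ≤ c k) (hf : ∀ k, 0 ≤ f k) (hg : ∀ k, g k ≤ 1)
    (h : ∑ k, c k * (f k * g k) = ∑ k, c k * f k) {k : κ} (hk : c k ≠ 0) :
    f k * g k = f k := by
  have hdefect : ∑ k, c k * (f k * (1 - g k)) = 0 := by
    simp only [mul_sub, mul_one, sum_sub_distrib, h, sub_self]
  have hk0 := (sum_eq_zero_iff_of_nonneg fun k _ =>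
    mul_nonneg (hc k) (mul_nonneg (hf k) (sub_nonneg.mpr (hg k)))).mp hdefect k (mem_univ k)
  linear_combination -(mul_eq_zero.mp hk0).resolve_left hk

theorem norm_inner_sq_eq_and_eq_zero_or_one_of_trace_mul_self_eq [Fintype ι] [Fintype I]
    [Fintype J] [DecidableEq I] [DecidableEq J] {w : ι → ℝ} {x : ι → EuclideanSpace ℂ I}
    {y : ι → EuclideanSpace ℂ J} {c : ℝ} (hw0 : ∀ α, 0 ≤ w α) (hw1 : ∑ α, w α = 1)
    (hx : ∀ α, ‖x α‖ = 1) (hy : ∀ α, ‖y α‖ = 1) (hxm : mixture w x = (c : ℂ) • 1)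
    (hym : mixture w y = (c : ℂ) • 1)
    (htr : let σ := mixture w fun α => prodVec (x α) (y α); (σ * σ).trace = c)
    {α β : ι} (hα : w α ≠ 0) (hβ : w β ≠ 0) :
    ‖⟪y α, y β⟫_ℂ‖ ^ 2 = ‖⟪x α, x β⟫_ℂ‖ ^ 2 ∧
      (‖⟪x α, x β⟫_ℂ‖ ^ 2 = 0 ∨ ‖⟪x α, x β⟫_ℂ‖ ^ 2 = 1) := by
  have hFG : ∑ α, ∑ β, w α * w β * (‖⟪x α, x β⟫_ℂ‖ ^ 2 * ‖⟪y α, y β⟫_ℂ‖ ^ 2) = c := by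
    simp_rw [trace_mixture_mul_self, inner_prodVec, norm_mul, mul_pow] at htr
    exact_mod_cast htr
  have hF := sum_sum_mul_norm_inner_sq_eq_of_mixture_eq_smul_one hw1 hx hxm
  have hG := sum_sum_mul_norm_inner_sq_eq_of_mixture_eq_smul_one hw1 hy hym
  simp only [← Fintype.sum_prod_type'] at hFG hF hG
  have hw : ∀ p : ι × ι, 0 ≤ w p.1 * w p.2 := fun p => mul_nonneg (hw0 p.1) (hw0 p.2)
  have hFG' := mul_eq_self_of_sum_mul_eq_sum (k := (α, β)) hw (fun _ => sq_nonneg _)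
    (fun p => norm_inner_sq_le_one (hy p.1) (hy p.2)) (hFG.trans hF.symm) (mul_ne_zero hα hβ)
  have hGF : ∑ p : ι × ι, w p.1 * w p.2 * (‖⟪y p.1, y p.2⟫_ℂ‖ ^ 2 * ‖⟪x p.1, x p.2⟫_ℂ‖ ^ 2)
      = c := by
    simpa only [mul_comm (‖⟪y _, y _⟫_ℂ‖ ^ 2)] using hFG
  have hGF' := mul_eq_self_of_sum_mul_eq_sum (k := (α, β)) hw (fun _ => sq_nonneg _)
    (fun p => norm_inner_sq_le_one (hx p.1) (hx p.2)) (hGF.trans hG.symm) (mul_ne_zero hα hβ)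
  dsimp only at hFG' hGF'
  have heq : ‖⟪y α, y β⟫_ℂ‖ ^ 2 = ‖⟪x α, x β⟫_ℂ‖ ^ 2 := by linear_combination -hGF' + hFG'
  refine ⟨heq, ?_⟩
  rw [heq] at hFG'
  exact or_iff_not_imp_left.mpr fun h0 => (mul_eq_left₀ h0).mp hFG'

theorem norm_inner_sq_eq_ite_of_eq_zero_or_one [Fintype I] [Fintype J] {x x' : EuclideanSpace ℂ I}
    {y y' : EuclideanSpace ℂ J} (hx : ‖x‖ = 1) (hx' : ‖x'‖ = 1) (hy : ‖y‖ = 1) (hy' : ‖y'‖ = 1)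
    (hxy : ‖⟪y, y'⟫_ℂ‖ ^ 2 = ‖⟪x, x'⟫_ℂ‖ ^ 2)
    (h01 : ‖⟪x, x'⟫_ℂ‖ ^ 2 = 0 ∨ ‖⟪x, x'⟫_ℂ‖ ^ 2 = 1) :
    ‖⟪x, x'⟫_ℂ‖ ^ 2 = if ketBra (prodVec x' y') = ketBra (prodVec x y) then 1 else 0 := by
  have hP : ketBra (prodVec x' y') = ketBra (prodVec x y) ↔ ‖⟪x, x'⟫_ℂ‖ * ‖⟪y, y'⟫_ℂ‖ = 1 := by
    rw [ketBra_eq_ketBra_iff (by rw [norm_prodVec, hx, hy, one_mul])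
      (by rw [norm_prodVec, hx', hy', one_mul]), inner_prodVec, norm_mul]
  rcases h01 with h0 | h1
  · rw [h0, if_neg]
    rw [hP, (pow_eq_zero_iff two_ne_zero).mp h0, zero_mul]
    exact zero_ne_one
  · rw [h1, if_pos]
    rw [h1, pow_eq_one_iff_of_nonneg (norm_nonneg _) two_ne_zero] at hxy
    rw [hP, (pow_eq_one_iff_of_nonneg (norm_nonneg _) two_ne_zero).mp h1, hxy, one_mul]

theorem sum_filter_eq_of_norm_inner_sq_eq_ite [Fintype ι] [Fintype I] [DecidableEq I]
    [DecidableEq X] {w : ι → ℝ} {v : ι → EuclideanSpace ℂ I} {M : ι → X} {c : ℝ}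
    (hv : ∀ α, ‖v α‖ = 1) (hvm : mixture w v = (c : ℂ) • 1)
    (hind : ∀ α β, w α ≠ 0 → w β ≠ 0 → ‖⟪v α, v β⟫_ℂ‖ ^ 2 = if M β = M α then 1 else 0)
    {α : ι} (hα : w α ≠ 0) : ∑ β with w β ≠ 0 ∧ M β = M α, w β = c := by
  calc ∑ β with w β ≠ 0 ∧ M β = M α, w β = ∑ β, w β * ‖⟪v α, v β⟫_ℂ‖ ^ 2 := by
        rw [sum_filter]
        refine sum_congr rfl fun β _ => ?_
        by_cases hβ : w β = 0
        · simp [hβ]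
        · rw [hind α β hα hβ]
          split_ifs <;> simp_all
    _ = c := by rw [sum_mul_norm_inner_sq_eq_of_mixture_eq_smul_one hvm, hv, one_pow, mul_one]

theorem exists_rep_of_fiber_weights_eq_inv_card [Fintype ι] [Fintype κ] [AddCommMonoid X]
    [Module ℂ X] [DecidableEq X] {w : ι → ℝ} {M : ι → X} (hw1 : ∑ α, w α = 1)
    (hfiber : ∀ α, w α ≠ 0 → ∑ β with w β ≠ 0 ∧ M β = M α, w β = (Fintype.card κ : ℝ)⁻¹) :
    ∃ rep : κ → ι, (∀ s, w (rep s) ≠ 0) ∧ Function.Injective (M ∘ rep) ∧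
      ∑ α, (w α : ℂ) • M α = (Fintype.card κ : ℂ)⁻¹ • ∑ s, M (rep s) := by
  set S : Finset ι := {α | w α ≠ 0}
  have hfiberS : ∀ α ∈ S, ∑ β ∈ S with M β = M α, w β = (Fintype.card κ : ℝ)⁻¹ := by
    intro α hα
    rw [filter_filter]
    exact hfiber α (mem_filter.mp hα).2
  have hcard : #(S.image M) = Fintype.card κ := by
    have h := sum_image' (s := S) (g := M) (f := fun _ => (Fintype.card κ : ℝ)⁻¹) w
      fun α hα => (hfiberS α hα).symm
    rw [sum_const, nsmul_eq_mul, sum_filter_ne_zero, hw1] at h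
    exact_mod_cast (eq_inv_of_mul_eq_one_left h).trans (inv_inv _)
  let e : κ ≃ S.image M := Fintype.equivOfCardEq (by rw [Fintype.card_coe, hcard])
  choose rep hrepS hrepM using fun s => mem_image.mp (e s).2
  refine ⟨rep, fun s => (mem_filter.mp (hrepS s)).2, fun s t h => e.injective
    (Subtype.ext ((hrepM s).symm.trans (h.trans (hrepM t)))), ?_⟩
  calc ∑ α, (w α : ℂ) • M α = ∑ α ∈ S, (w α : ℂ) • M α :=
        (sum_filter_of_ne (p := fun α => w α ≠ 0) fun α _ h hw => h (by simp [hw])).symm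
    _ = ∑ m ∈ S.image M, (Fintype.card κ : ℂ)⁻¹ • m := by
        refine (sum_image' _ fun α hα => ?_).symm
        rw [sum_congr rfl fun β hβ => by rw [(mem_filter.mp hβ).2], ← sum_smul]
        have h := congrArg (fun r : ℝ => (r : ℂ) • M α) (hfiberS α hα)
        push_cast at h ⊢
        exact h.symm
    _ = (Fintype.card κ : ℂ)⁻¹ • ∑ s, M (rep s) := by
        rw [← smul_sum, ← sum_coe_sort, ← e.sum_comp]
        simp only [hrepM]

theorem orthonormal_comp_of_norm_inner_sq_eq_ite [Fintype I] [DecidableEq X] {w : ι → ℝ}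
    {v : ι → EuclideanSpace ℂ I} {M : ι → X} {rep : κ → ι} (hv : ∀ α, ‖v α‖ = 1)
    (hind : ∀ α β, w α ≠ 0 → w β ≠ 0 → ‖⟪v α, v β⟫_ℂ‖ ^ 2 = if M β = M α then 1 else 0)
    (hrep : ∀ s, w (rep s) ≠ 0) (hinj : Function.Injective (M ∘ rep)) :
    Orthonormal ℂ (v ∘ rep) := by
  classical
  rw [orthonormal_iff_ite]
  intro s t
  split_ifs with hst
  · rw [hst, Function.comp_apply, inner_self_eq_one_of_norm_eq_one (hv _)]
  · have h := hind (rep s) (rep t) (hrep s) (hrep t)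
    rw [if_neg fun h : M (rep t) = M (rep s) => hst (hinj h).symm] at h
    simpa using h

theorem exists_orthonormal_bases_of_trace_mul_self_eq [Fintype ι] [Fintype I] [DecidableEq I]
    {w : ι → ℝ} {x y : ι → EuclideanSpace ℂ I} (hw0 : ∀ α, 0 ≤ w α) (hw1 : ∑ α, w α = 1)
    (hx : ∀ α, ‖x α‖ = 1) (hy : ∀ α, ‖y α‖ = 1)
    (hxm : mixture w x = (Fintype.card I : ℂ)⁻¹ • 1)
    (hym : mixture w y = (Fintype.card I : ℂ)⁻¹ • 1)
    (htr : let σ := mixture w fun α => prodVec (x α) (y α);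
      (σ * σ).trace = (Fintype.card I : ℂ)⁻¹) :
    ∃ Φ Ψ : I → EuclideanSpace ℂ I,
      Orthonormal ℂ Φ ∧ Orthonormal ℂ Ψ ∧
      Submodule.span ℂ (Set.range Φ) = ⊤ ∧ Submodule.span ℂ (Set.range Ψ) = ⊤ ∧
      (mixture w fun α => prodVec (x α) (y α))
        = (Fintype.card I : ℂ)⁻¹ • ∑ s, ketBra (prodVec (Φ s) (Ψ s)) := by
  have hc : (((Fintype.card I : ℝ)⁻¹ : ℝ) : ℂ) = (Fintype.card I : ℂ)⁻¹ := by push_cast; rfl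
  rw [← hc] at hxm hym htr
  set P : ι → Matrix (I × I) (I × I) ℂ := fun α => ketBra (prodVec (x α) (y α))
  have hmem := fun α β (hα : w α ≠ 0) (hβ : w β ≠ 0) =>
    norm_inner_sq_eq_and_eq_zero_or_one_of_trace_mul_self_eq hw0 hw1 hx hy hxm hym htr hα hβ
  have hindx : ∀ α β, w α ≠ 0 → w β ≠ 0 →
      ‖⟪x α, x β⟫_ℂ‖ ^ 2 = if P β = P α then 1 else 0 := fun α β hα hβ =>
    norm_inner_sq_eq_ite_of_eq_zero_or_one (hx α) (hx β) (hy α) (hy β) (hmem α β hα hβ).1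
      (hmem α β hα hβ).2
  have hindy : ∀ α β, w α ≠ 0 → w β ≠ 0 →
      ‖⟪y α, y β⟫_ℂ‖ ^ 2 = if P β = P α then 1 else 0 := fun α β hα hβ =>
    (hmem α β hα hβ).1.trans (hindx α β hα hβ)
  obtain ⟨rep, hrep, hinj, hσ⟩ := exists_rep_of_fiber_weights_eq_inv_card (κ := I) hw1
    fun α hα => sum_filter_eq_of_norm_inner_sq_eq_ite hx hxm hindx hα
  have hΦ := orthonormal_comp_of_norm_inner_sq_eq_ite hx hindx hrep hinj
  have hΨ := orthonormal_comp_of_norm_inner_sq_eq_ite hy hindy hrep hinj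
  exact ⟨x ∘ rep, y ∘ rep, hΦ, hΨ,
    hΦ.linearIndependent.span_eq_top_of_card_eq_finrank' finrank_euclideanSpace.symm,
    hΨ.linearIndependent.span_eq_top_of_card_eq_finrank' finrank_euclideanSpace.symm, hσ⟩

theorem trace_mul_self_of_orthonormal [Fintype κ] [Fintype I] [Fintype J]
    {Φ : κ → EuclideanSpace ℂ I} {Ψ : κ → EuclideanSpace ℂ J} (hΦ : Orthonormal ℂ Φ)
    (hΨ : Orthonormal ℂ Ψ) :
    let σ := (Fintype.card κ : ℂ)⁻¹ • ∑ s, ketBra (prodVec (Φ s) (Ψ s));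
    (σ * σ).trace = (Fintype.card κ : ℂ)⁻¹ := by
  classical
  intro σ
  have hσ : σ = mixture (fun _ => (Fintype.card κ : ℝ)⁻¹) fun s => prodVec (Φ s) (Ψ s) := by
    simp [σ, mixture, smul_sum]
  have hinner : ∀ s t, ‖⟪prodVec (Φ s) (Ψ s), prodVec (Φ t) (Ψ t)⟫_ℂ‖ ^ 2
      = if s = t then 1 else 0 := by
    intro s t
    rw [inner_prodVec, orthonormal_iff_ite.mp hΦ, orthonormal_iff_ite.mp hΨ]
    split_ifs <;> simp
  rw [hσ, trace_mixture_mul_self]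
  simp only [hinner, mul_ite, mul_one, mul_zero, sum_ite_eq, mem_univ, if_true, sum_const,
    card_univ, nsmul_eq_mul]
  push_cast
  simpa [mul_assoc] using inv_mul_mul_self ((Fintype.card κ : ℂ)⁻¹)

end

/-- A separable LMM density matrix attains `Tr σ² = 1/d` iff it is of the form
`σ = (1/d) Σ_s |φ_s,ψ_s⟩⟨φ_s,ψ_s|` for orthonormal bases `{φ_s}`, `{ψ_s}` of `ℂ^d`. -/
theorem separable_LMM_max_purity_iff (d : ℕ) [NeZero d]
    (σ : Matrix (ZMod d × ZMod d) (ZMod d × ZMod d) ℂ)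
    (hsep : IsSeparableState d σ)
    (hB : (fun a b => ∑ t : ZMod d, σ (a, t) (b, t))
      = ((d : ℂ))⁻¹ • (1 : Matrix (ZMod d) (ZMod d) ℂ))
    (hA : (fun a b => ∑ s : ZMod d, σ (s, a) (s, b))
      = ((d : ℂ))⁻¹ • (1 : Matrix (ZMod d) (ZMod d) ℂ)) :
    (σ * σ).trace = ((d : ℂ))⁻¹ ↔
    ∃ φ ψ : ZMod d → EuclideanSpace ℂ (ZMod d),
      Orthonormal ℂ φ ∧ Orthonormal ℂ ψ ∧
      Submodule.span ℂ (Set.range φ) = ⊤ ∧ Submodule.span ℂ (Set.range ψ) = ⊤ ∧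
      σ = ((d : ℂ))⁻¹ • ∑ s : ZMod d,
        Matrix.vecMulVec (fun p : ZMod d × ZMod d => φ s p.1 * ψ s p.2)
          (star (fun p : ZMod d × ZMod d => φ s p.1 * ψ s p.2)) := by
  obtain ⟨n, w, φ, ψ, hw0, hw1, hφ, hψ, hσ⟩ := hsep
  let x : Fin n → EuclideanSpace ℂ (ZMod d) := fun α => WithLp.toLp 2 (φ α)
  let y : Fin n → EuclideanSpace ℂ (ZMod d) := fun α => WithLp.toLp 2 (ψ α)
  have hx : ∀ α, ‖x α‖ = 1 := fun α => by simp [x, EuclideanSpace.norm_eq, hφ α]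
  have hy : ∀ α, ‖y α‖ = 1 := fun α => by simp [y, EuclideanSpace.norm_eq, hψ α]
  replace hσ : σ = mixture w fun α => prodVec (x α) (y α) := hσ
  subst hσ
  have hd : (Fintype.card (ZMod d) : ℂ) = d := by rw [ZMod.card]
  have hxm : mixture w x = (Fintype.card (ZMod d) : ℂ)⁻¹ • 1 := by
    rw [← partialTraceRight_mixture w x hy, hd]
    exact hB
  have hym : mixture w y = (Fintype.card (ZMod d) : ℂ)⁻¹ • 1 := by
    rw [← partialTraceLeft_mixture w y hx, hd]
    exact hA
  rw [← hd]
  refine ⟨exists_orthonormal_bases_of_trace_mul_self_eq hw0 hw1 hx hy hxm hym, ?_⟩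
  rintro ⟨Φ, Ψ, hΦ, hΨ, -, -, hσ⟩
  rw [hσ]
  exact trace_mul_self_of_orthonormal hΦ hΨ
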